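/- arXiv:1707.09214 — 4 statements merged into one kernel-verified Lean document; each statement's English description precedes it below -/
import Mathlib

section
/- For every integer d'' ≥ 6 there exists a 3-snake S of some length T in Q_{d''} such that all of the following hold: S_{T−3} = (1,0,1,0,1,0,…,0), S_{T−2} = (1,0,1,0,…,0), S_{T−1} = (1,0,…,0), S_T = (0,…,0), the number of 1-coordinates of S_t is strictly greater than 3 for every t < T−3, and T ≥ s(d''−1). -/
/-!
Take a longest `3`-snake in `Q_{d''-1}`. Translations and coordinate permutations of the cube are
isometries and act transitively on paths `u, v, w` with `u ≠ w`, so the snake may be assumed to end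
with `ofOnes {1, 3}, ofOnes {1}, 0`. Prefixing every vertex with a coordinate `1` and appending the
origin gives a snake one step longer with the required tail: the origin is at distance `1 + ‖x‖`
from the lift of `x`, which is at least `4` when `x` lies three or more steps before the old
endpoint `0`, and is `3` for `x = ofOnes {1, 3}`.
-/

/-- A vertex of the `d`-dimensional hypercube `{0,1}^d`. -/
abbrev Cube (d : ℕ) := Fin d → Bool

/-- One step of `r`-neighbour bootstrap percolation on `Q_d`: a vertex becomes infected
if it has at least `r` infected neighbours (neighbours = Hamming distance 1). -/
noncomputable def bootStep (d r : ℕ) (A : Set (Cube d)) : Set (Cube d) :=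
  A ∪ {v | r ≤ {u : Cube d | hammingDist u v = 1 ∧ u ∈ A}.ncard}

/-- The set of infected sites at time `t`, starting from `A`. -/
noncomputable def boot (d r : ℕ) (A : Set (Cube d)) : ℕ → Set (Cube d)
  | 0 => A
  | t + 1 => bootStep d r (boot d r A t)

/-- `A` percolates: eventually every vertex is infected. -/
def Percolates (d r : ℕ) (A : Set (Cube d)) : Prop :=
  ∃ t, boot d r A t = Set.univ

/-- The percolation time of `A`: the least `t` with all sites infected. -/
noncomputable def percTime (d r : ℕ) (A : Set (Cube d)) : ℕ :=
  sInf {t | boot d r A t = Set.univ}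

/-- `M_r(d)`: the maximal percolation time over percolating subsets of `Q_d`. -/
noncomputable def maxPercTime (d r : ℕ) : ℕ :=
  sSup {T | ∃ A : Set (Cube d), Percolates d r A ∧ percTime d r A = T}

/-- The infection time `t_v` of a vertex `v`. -/
noncomputable def infTime (d r : ℕ) (A : Set (Cube d)) (v : Cube d) : ℕ :=
  sInf {t | v ∈ boot d r A t}

/-- A `k`-snake of length `T` in `Q_d`: a path `S_0, …, S_T` (consecutive vertices at
Hamming distance 1, all vertices distinct) such that `d(S_t, S_{t'}) ≥ k` whenever
`t' − t ≥ k`. -/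
def IsSnake (d k T : ℕ) (S : ℕ → Cube d) : Prop :=
  (∀ t, t < T → hammingDist (S t) (S (t + 1)) = 1) ∧
  (∀ t t', t ≤ T → t' ≤ T → S t = S t' → t = t') ∧
  (∀ t t', t' ≤ T → t + k ≤ t' → k ≤ hammingDist (S t) (S t'))

/-- `s(d)`: the maximal length of a `3`-snake in `Q_d`. -/
noncomputable def snakeMax (d : ℕ) : ℕ :=
  sSup {T | ∃ S : ℕ → Cube d, IsSnake d 3 T S}

/-- `‖x‖`: the number of `1`-coordinates of `x`. -/
def wt {d : ℕ} (x : Cube d) : ℕ := hammingDist x (fun _ => false)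

/-- The vertex of `Q_d` whose `1`-coordinates are exactly the positions in `s`
(0-indexed). -/
def ofOnes (d : ℕ) (s : Finset ℕ) : Cube d := fun i => decide (i.val ∈ s)

/-- `(b, a)`: the vertex of `Q_d` with first coordinate `b` and remaining coordinates `a`. -/
def extendCube (d : ℕ) (b : Bool) (a : Cube (d - 1)) : Cube d :=
  fun i => if h : i.val = 0 then b else a ⟨i.val - 1, by have := i.isLt; omega⟩

/-- `(y, x)`: the vertex of `Q_d` whose first `9` coordinates have `1`s exactly at the
(0-indexed) positions in `ys ⊆ {0,…,8}` and whose last `d − 9` coordinates are `x`. -/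
def embed9 (d : ℕ) (ys : Finset ℕ) (x : Cube (d - 9)) : Cube d :=
  fun i => if h : i.val < 9 then decide (i.val ∈ ys) else x ⟨i.val - 9, by have := i.isLt; omega⟩

/-- `J_1 = [1,1][*]^{d-2}`: vertices whose first two coordinates are `1`. -/
def J1 (d : ℕ) : Set (Cube d) := {x | ∀ i : Fin d, i.val < 2 → x i = true}

/-- `J_2`: the two vertices whose only `1`-coordinates are coordinate 3 together with
exactly one of coordinates 1 and 2 (1-indexed). -/
def J2 (d : ℕ) : Set (Cube d) := {ofOnes d {0, 2}, ofOnes d {1, 2}}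

/-- `J_3`: vertices with `(x_1,x_2,x_3) ∈ {(0,1,0),(1,0,0)}` whose last `d' = d-3`
coordinates form the word `0^{2l} 1 1 0^{d'-2-2l}` for some `0 ≤ l ≤ (d'-2)/2`. -/
def J3 (d : ℕ) : Set (Cube d) :=
  {x | ∃ l : ℕ, 2 * l + 2 ≤ d - 3 ∧
    (x = ofOnes d {0, 3 + 2 * l, 4 + 2 * l} ∨ x = ofOnes d {1, 3 + 2 * l, 4 + 2 * l})}

/-- The five snake conditions of Lemma 3 (for a `3`-snake of length `T` in `Q_{d''}`). -/
def SnakeConds (d'' T : ℕ) (S : ℕ → Cube d'') : Prop :=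
  S T = ofOnes d'' ∅ ∧ S (T - 1) = ofOnes d'' {0} ∧ S (T - 2) = ofOnes d'' {0, 2} ∧
  S (T - 3) = ofOnes d'' {0, 2, 4} ∧ ∀ t, t < T - 3 → 3 < wt (S t)

/-- `S^i = {S_{T-i-3j} : j ≥ 0, T-i-3j ≥ 0}`. -/
def SnakeTail (d'' T : ℕ) (S : ℕ → Cube d'') (i : ℕ) : Set (Cube d'') :=
  {x | ∃ j : ℕ, 3 * j + i ≤ T ∧ x = S (T - i - 3 * j)}

/-- `I_0`: vertices whose last `d'' = d - 9` coordinates belong to `S^i` for some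
`i ∈ {1,2,3}` and whose first `9` coordinates are all `0` except exactly one of the two
coordinates in (1-indexed) positions `2i+2` and `2i+3`, which equals `1`. -/
def I0 (d T : ℕ) (S : ℕ → Cube (d - 9)) : Set (Cube d) :=
  {v | ∃ i ∈ ({1, 2, 3} : Set ℕ), ∃ x ∈ SnakeTail (d - 9) T S i,
    v = embed9 d {2 * i + 1} x ∨ v = embed9 d {2 * i + 2} x}

open Finset Function
open scoped symmDiff

section Hamming

variable {ι : Type*} [Fintype ι]

lemma hammingDist_sub_right {G : ι → Type*} [∀ i, AddGroup (G i)] [∀ i, DecidableEq (G i)]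
    (x y z : ∀ i, G i) : hammingDist (x - z) (y - z) = hammingDist x y :=
  hammingDist_comp (fun i a => a - z i) fun _ => sub_left_injective

lemma hammingDist_comp_equiv {ι' β : Type*} [Fintype ι'] [DecidableEq β] (e : ι' ≃ ι)
    (x y : ι → β) : hammingDist (x ∘ e) (y ∘ e) = hammingDist x y := by
  simp only [hammingDist]
  rw [← card_map e.toEmbedding]
  congr 1
  ext i
  simp

lemma exists_eq_single_of_hammingNorm_eq_one [DecidableEq ι] {z : ι → Bool}
    (hz : hammingNorm z = 1) : ∃ i, z = Pi.single i true := by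
  obtain ⟨i, hi⟩ := card_eq_one.mp hz
  refine ⟨i, funext fun j => ?_⟩
  have hj := Finset.ext_iff.mp hi j
  simp only [mem_filter, mem_univ, true_and, mem_singleton] at hj
  by_cases hji : j = i
  · subst hji; simpa [Bool.zero_eq_false] using hj
  · simpa [hji, Bool.zero_eq_false] using hj

lemma Equiv.Perm.exists_apply_eq_apply_eq {α : Type*} [DecidableEq α] {a b c d : α}
    (hab : a ≠ b) (hcd : c ≠ d) : ∃ σ : Equiv.Perm α, σ a = c ∧ σ b = d := by
  set τ := Equiv.swap a c
  have hτb : τ b ≠ c := fun h => hab (τ.injective ((Equiv.swap_apply_left a c).trans h.symm))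
  refine ⟨τ.trans (Equiv.swap (τ b) d), ?_, Equiv.swap_apply_left _ _⟩
  simp only [Equiv.trans_apply, τ, Equiv.swap_apply_left]
  exact Equiv.swap_apply_of_ne_of_ne hτb.symm hcd

end Hamming

lemma card_filter_fin_val (n : ℕ) (p : ℕ → Prop) [DecidablePred p] :
    #{i : Fin n | p i} = #{i ∈ range n | p i} := by
  rw [← card_map Fin.valEmbedding]
  congr 1
  ext i
  simp only [mem_map, mem_filter, mem_univ, true_and, Fin.valEmbedding_apply, mem_range]
  exact ⟨fun ⟨j, hj, hji⟩ => hji ▸ ⟨j.isLt, hj⟩, fun ⟨hi, hp⟩ => ⟨⟨i, hi⟩, hp, rfl⟩⟩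

lemma hammingDist_ofOnes (d : ℕ) (s s' : Finset ℕ) :
    hammingDist (ofOnes d s) (ofOnes d s') = #{i ∈ range d | i ∈ s ∆ s'} := by
  rw [hammingDist, ← card_filter_fin_val]
  congr 1
  ext i
  simp only [ofOnes, ne_eq, decide_eq_decide, mem_filter, mem_univ, true_and, mem_symmDiff]
  tauto

lemma ofOnes_empty (d : ℕ) : ofOnes d ∅ = 0 := by
  funext i; simp [ofOnes, Bool.zero_eq_false]

lemma wt_ofOnes (d : ℕ) (s : Finset ℕ) : wt (ofOnes d s) = #{i ∈ range d | i ∈ s} := by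
  rw [wt, show (fun _ => false) = ofOnes d ∅ from (ofOnes_empty d).symm, hammingDist_ofOnes,
    ← bot_eq_empty, symmDiff_bot]

lemma wt_ofOnes_of_forall_lt {d : ℕ} {s : Finset ℕ} (hs : ∀ i ∈ s, i < d) :
    wt (ofOnes d s) = #s := by
  rw [wt_ofOnes, filter_mem_eq_inter, inter_eq_right.2 fun i hi => mem_range.2 (hs i hi)]

lemma hammingDist_ofOnes_range {d t t' : ℕ} (h : t ≤ t') (h' : t' ≤ d) :
    hammingDist (ofOnes d (range t)) (ofOnes d (range t')) = t' - t := by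
  rw [hammingDist_ofOnes, symmDiff_of_le (range_subset_range.2 h)]
  suffices {i ∈ range d | i ∈ range t' \ range t} = Ico t t' by rw [this, Nat.card_Ico]
  ext i
  simp only [mem_filter, mem_range, mem_sdiff, mem_Ico]
  omega

lemma ofOnes_pair {d i j : ℕ} (hi : i < d) (hj : j < d) (hij : i ≠ j) :
    ofOnes d {i, j} = Pi.single ⟨i, hi⟩ true + Pi.single ⟨j, hj⟩ true := by
  funext k
  by_cases hki : k.val = i <;> by_cases hkj : k.val = j <;>
    simp [ofOnes, Pi.single_apply, Fin.ext_iff, hki, hkj, hij, hij.symm, Bool.zero_eq_false]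

lemma ofOnes_singleton {d i : ℕ} (hi : i < d) : ofOnes d {i} = Pi.single ⟨i, hi⟩ true := by
  funext k
  by_cases hki : k.val = i <;> simp [ofOnes, Pi.single_apply, Fin.ext_iff, hki, Bool.zero_eq_false]

section Extend

variable {d : ℕ}

lemma hammingDist_extendCube (hd : 1 ≤ d) (b c : Bool) (x y : Cube (d - 1)) :
    hammingDist (extendCube d b x) (extendCube d c y) =
      hammingDist x y + if b = c then 0 else 1 := by
  obtain ⟨n, rfl⟩ := Nat.exists_eq_add_of_le' hd
  rw [hammingDist, Fin.card_filter_univ_succ]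
  simp only [extendCube, Fin.coe_ofNat_eq_mod, Nat.zero_mod, ↓reduceDIte, ne_eq, Fin.val_succ,
    Nat.add_eq_zero_iff, one_ne_zero, and_false, Nat.add_one_sub_one, Fin.eta, ite_not, hammingDist]
  split_ifs <;> rfl

lemma wt_extendCube_true (hd : 1 ≤ d) (x : Cube (d - 1)) :
    wt (extendCube d true x) = wt x + 1 := by
  have h0 : (fun _ => false : Cube d) = extendCube d false (fun _ => false) := by
    funext i; simp [extendCube]
  rw [wt, h0, hammingDist_extendCube hd]
  rfl

lemma extendCube_true_ofOnes (s : Finset ℕ) :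
    extendCube d true (ofOnes (d - 1) s) = ofOnes d (insert 0 (s.image (· + 1))) := by
  funext i
  by_cases hi : i.val = 0
  · simp [extendCube, ofOnes, hi]
  · simp only [extendCube, ofOnes, hi, dite_false, decide_eq_decide, mem_insert, mem_image]
    refine ⟨fun h => Or.inr ⟨_, h, by omega⟩, ?_⟩
    rintro (h | ⟨a, ha, hai⟩)
    exacts [h.elim, by rwa [← hai, Nat.add_sub_cancel]]

end Extend

-- `Bool` is a Boolean ring, so on `Cube n` subtraction is coordinatewise xor.
lemma exists_isometry_path_eq_ofOnes {n : ℕ} (hn : 4 ≤ n) {u v w : Cube n}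
    (huv : hammingDist u v = 1) (hvw : hammingDist v w = 1) (huw : u ≠ w) :
    ∃ f : Cube n → Cube n, (∀ x y, hammingDist (f x) (f y) = hammingDist x y) ∧
      f u = ofOnes n {1, 3} ∧ f v = ofOnes n {1} ∧ f w = 0 := by
  have single_of_dist : ∀ x y : Cube n, hammingDist x y = 1 → ∃ i, x - y = Pi.single i true :=
    fun x y h => exists_eq_single_of_hammingNorm_eq_one <| by
      rwa [← hammingDist_zero_right, ← sub_self y, hammingDist_sub_right]
  obtain ⟨a, ha⟩ := single_of_dist v w hvw
  obtain ⟨b, hb⟩ := single_of_dist u v huv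
  have hba : b ≠ a := by
    rintro rfl
    refine huw (sub_eq_zero.1 ?_)
    rw [← sub_add_sub_cancel u v w, ha, hb]
    exact funext fun i => BooleanRing.add_self _
  obtain ⟨σ, hσa, hσb⟩ := Equiv.Perm.exists_apply_eq_apply_eq hba.symm
    (show (⟨1, by omega⟩ : Fin n) ≠ ⟨3, by omega⟩ by simp)
  have hσ : ∀ i, Pi.single i true ∘ σ.symm = Pi.single (σ i) true := fun i => by
    rw [Pi.single_comp_equiv, Equiv.symm_symm]
  refine ⟨fun x => (x - w) ∘ σ.symm, fun x y => ?_, ?_, ?_, ?_⟩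
  · rw [hammingDist_comp_equiv, hammingDist_sub_right]
  · change (u - w) ∘ σ.symm = _
    rw [← sub_add_sub_cancel u v w, hb, ha, Pi.add_comp, hσ, hσ, hσa, hσb, add_comm,
      ofOnes_pair (by omega) (by omega) (by omega)]
  · change (v - w) ∘ σ.symm = _
    rw [ha, hσ, hσa, ofOnes_singleton]
  · change (w - w) ∘ σ.symm = _
    rw [sub_self]; rfl

namespace IsSnake

variable {d e k T : ℕ} {S : ℕ → Cube d}

lemma map (hS : IsSnake d k T S) {f : Cube d → Cube e}
    (hf : ∀ x y, hammingDist (f x) (f y) = hammingDist x y) : IsSnake e k T (f ∘ S) := by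
  refine ⟨fun t ht => ?_, fun t t' ht ht' h => hS.2.1 t t' ht ht' ?_, fun t t' ht' h => ?_⟩
  · simpa only [comp_apply, hf] using hS.1 t ht
  · rw [← hammingDist_eq_zero, ← hf]; exact hammingDist_eq_zero.2 h
  · simpa only [comp_apply, hf] using hS.2.2 t t' ht' h

lemma snoc (hS : IsSnake d k T S) {v : Cube d} (hadj : hammingDist (S T) v = 1)
    (hne : ∀ t ≤ T, S t ≠ v) (hfar : ∀ t, t + k ≤ T + 1 → k ≤ hammingDist (S t) v) :
    IsSnake d k (T + 1) (update S (T + 1) v) := by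
  have hold : ∀ t ≤ T, update S (T + 1) v t = S t := fun t ht => update_of_ne (by omega) _ _
  have hnew : update S (T + 1) v (T + 1) = v := update_self _ _ _
  refine ⟨fun t ht => ?_, fun t t' ht ht' h => ?_, fun t t' ht' h => ?_⟩
  · rcases Nat.lt_or_ge t T with htT | htT
    · rw [hold t htT.le, hold (t + 1) htT]; exact hS.1 t htT
    · obtain rfl : t = T := by omega
      rw [hold t le_rfl, hnew]; exact hadj
  · rcases Nat.lt_or_ge T t with htT | htT <;> rcases Nat.lt_or_ge T t' with htT' | htT'
    · omega
    · obtain rfl : t = T + 1 := by omega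
      rw [hnew, hold t' htT'] at h; exact absurd h.symm (hne t' htT')
    · obtain rfl : t' = T + 1 := by omega
      rw [hnew, hold t htT] at h; exact absurd h (hne t htT)
    · rw [hold t htT, hold t' htT'] at h; exact hS.2.1 t t' htT htT' h
  · rcases Nat.lt_or_ge T t' with htT' | htT'
    · obtain rfl : t' = T + 1 := by omega
      rcases Nat.lt_or_ge T t with htT | htT
      · omega
      · rw [hold t htT, hnew]; exact hfar t h
    · rw [hold t (by omega), hold t' htT']; exact hS.2.2 t t' htT' h

lemma length_lt (hS : IsSnake d k T S) : T < 2 ^ d := by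
  have hinj : Injective (fun t : Fin (T + 1) => S t) := fun t t' h =>
    Fin.ext (hS.2.1 t t' (Nat.lt_succ_iff.1 t.isLt) (Nat.lt_succ_iff.1 t'.isLt) h)
  simpa using Fintype.card_le_of_injective _ hinj

lemma three_le_wt_of_last_eq_zero (hS : IsSnake d 3 T S) (hST : S T = 0) {t : ℕ}
    (ht : t + 3 ≤ T) : 3 ≤ wt (S t) := by
  have := hS.2.2 t T le_rfl ht
  rwa [hST] at this

end IsSnake

lemma isSnake_ofOnes_range {d k T : ℕ} (hT : T ≤ d) :
    IsSnake d k T (fun t => ofOnes d (range t)) := by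
  have hdist : ∀ {t t'}, t ≤ t' → t' ≤ T →
      hammingDist (ofOnes d (range t)) (ofOnes d (range t')) = t' - t :=
    fun htt ht' => hammingDist_ofOnes_range htt (ht'.trans hT)
  refine ⟨fun t ht => ?_, fun t t' ht ht' h => ?_, fun t t' ht' h => ?_⟩
  · rw [hdist (Nat.le_succ t) ht]; omega
  · dsimp only at h
    rcases le_total t t' with htt | htt
    · have := hdist htt ht'
      rw [h, hammingDist_self] at this; omega
    · have := hdist htt ht
      rw [h, hammingDist_self] at this; omega
  · rw [hdist (by omega) ht']; omega

lemma bddAbove_snakeLengths (d : ℕ) : BddAbove {T | ∃ S : ℕ → Cube d, IsSnake d 3 T S} :=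
  ⟨2 ^ d, fun _ ⟨_, hS⟩ => hS.length_lt.le⟩

lemma le_snakeMax {d T : ℕ} {S : ℕ → Cube d} (hS : IsSnake d 3 T S) : T ≤ snakeMax d :=
  le_csSup (bddAbove_snakeLengths d) ⟨S, hS⟩

lemma exists_isSnake_snakeMax (d : ℕ) : ∃ S, IsSnake d 3 (snakeMax d) S :=
  Nat.sSup_mem (s := {T | ∃ S : ℕ → Cube d, IsSnake d 3 T S})
    ⟨0, _, isSnake_ofOnes_range (Nat.zero_le d)⟩ (bddAbove_snakeLengths d)

lemma exists_normalized_isSnake_snakeMax {n : ℕ} (hn : 4 ≤ n) :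
    ∃ m R, snakeMax n = m + 2 ∧ IsSnake n 3 (m + 2) R ∧
      R m = ofOnes n {1, 3} ∧ R (m + 1) = ofOnes n {1} ∧ R (m + 2) = 0 := by
  obtain ⟨S, hS⟩ := exists_isSnake_snakeMax n
  obtain ⟨m, hm⟩ : ∃ m, snakeMax n = m + 2 :=
    Nat.exists_eq_add_of_le' (le_snakeMax (isSnake_ofOnes_range (k := 3) (by omega : 2 ≤ n)))
  rw [hm] at hS
  obtain ⟨f, hf, hu, hv, hw⟩ := exists_isometry_path_eq_ofOnes hn (hS.1 m (by omega))
    (hS.1 (m + 1) (by omega)) (fun h => by have := hS.2.1 m (m + 2) (by omega) le_rfl h; omega)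
  exact ⟨m, f ∘ S, hm, hS.map hf, hu, hv, hw⟩

lemma isSnake_extendCube_snoc {d m : ℕ} {R : ℕ → Cube (d - 1)} (hd : 5 ≤ d) (hR : IsSnake (d - 1) 3 (m + 2) R)
    (hRm : R m = ofOnes (d - 1) {1, 3}) (hRm2 : R (m + 2) = 0) :
    IsSnake d 3 (m + 3) (update (extendCube d true ∘ R) (m + 3) (ofOnes d ∅)) := by
  have hdist : ∀ t, hammingDist (extendCube d true (R t)) (ofOnes d ∅) = wt (R t) + 1 :=
    fun t => by rw [ofOnes_empty]; exact wt_extendCube_true (by omega) (R t)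
  refine (hR.map fun x y => ?_).snoc ?_ (fun t _ => ?_) (fun t ht => ?_)
  · rw [hammingDist_extendCube (by omega), if_pos rfl, add_zero]
  · rw [comp_apply, hdist, hRm2]
    exact congrArg (· + 1) (hammingDist_self _)
  · rw [comp_apply, ← hammingDist_ne_zero, hdist]; omega
  · rw [comp_apply, hdist]
    rcases Nat.lt_or_ge t m with htm | htm
    · have := hR.three_le_wt_of_last_eq_zero hRm2 (t := t) (by omega); omega
    · have h13 : ∀ i ∈ ({1, 3} : Finset ℕ), i < d - 1 := by
        simp only [mem_insert, mem_singleton, forall_eq_or_imp, forall_eq]; omega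
      rw [show t = m by omega, hRm, wt_ofOnes_of_forall_lt h13, card_pair (by decide)]

/-- For every `d'' ≥ 6` there is a `3`-snake `S` of some length `T` in
`Q_{d''}` with `S_{T-3} = (1,0,1,0,1,0,…,0)`, `S_{T-2} = (1,0,1,0,…,0)`,
`S_{T-1} = (1,0,…,0)`, `S_T = (0,…,0)`, `‖S_t‖ > 3` for all `t < T - 3`, and
`T ≥ s(d'' − 1)`. -/
theorem stmt2 (d'' : ℕ) (hd : 6 ≤ d'') :
    ∃ (T : ℕ) (S : ℕ → Cube d''), IsSnake d'' 3 T S ∧ 3 ≤ T ∧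
      S (T - 3) = ofOnes d'' {0, 2, 4} ∧
      S (T - 2) = ofOnes d'' {0, 2} ∧
      S (T - 1) = ofOnes d'' {0} ∧
      S T = ofOnes d'' ∅ ∧
      (∀ t, t < T - 3 → 3 < wt (S t)) ∧
      snakeMax (d'' - 1) ≤ T := by
  obtain ⟨m, R, hm, hR, hRm, hRm1, hRm2⟩ :=
    exists_normalized_isSnake_snakeMax (n := d'' - 1) (by omega)
  refine ⟨m + 3, _, isSnake_extendCube_snoc (by omega) hR hRm hRm2, by omega,
    ?_, ?_, ?_, update_self _ _ _, fun t ht => ?_, by omega⟩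
  · rw [show m + 3 - 3 = m by omega, update_of_ne (by omega), comp_apply, hRm,
      extendCube_true_ofOnes]
    rfl
  · rw [show m + 3 - 2 = m + 1 by omega, update_of_ne (by omega), comp_apply, hRm1,
      extendCube_true_ofOnes]
    rfl
  · rw [show m + 3 - 1 = m + 2 by omega, update_of_ne (by omega), comp_apply, hRm2,
      ← ofOnes_empty, extendCube_true_ofOnes]
    rfl
  · rw [update_of_ne (by omega), comp_apply, wt_extendCube_true (by omega)]
    have := hR.three_le_wt_of_last_eq_zero hRm2 (t := t) (by omega)
    omega
end

section
/- For every integer r ≥ 3 and every d ≥ r, the maximal percolation time of r-neighbour bootstrap percolation on the d-dimensional hypercube satisfies M_r(d) ≤ (4r+2)·2^d/d. -/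
open Finset

def diffSetEquiv {d : ℕ} (x : Cube d) : Cube d ≃ Finset (Fin d) where
  toFun v := {i | v i ≠ x i}
  invFun s i := xor (decide (i ∈ s)) (x i)
  left_inv v := by funext i; cases hv : v i <;> cases hx : x i <;> simp [hv, hx]
  right_inv s := by ext i; by_cases h : i ∈ s <;> simp_all

lemma card_hammingDist_eq {d : ℕ} (x : Cube d) (k : ℕ) :
    #{v | hammingDist v x = k} = d.choose k :=
  calc #{v | hammingDist v x = k} = #(powersetCard k (univ : Finset (Fin d))) :=
        card_equiv (diffSetEquiv x) fun v => by simp [diffSetEquiv, hammingDist]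
    _ = d.choose k := by simp

lemma mul_le_of_succ_mul_le {T d r N : ℕ} (hT : T + 1 ≤ N)
    (h : (T + 1) * d ≤ (r + 2) * N + (T + 1) * (r - 1)) : T * d ≤ (4 * r + 2) * N := by
  obtain _ | k := r
  · simp only [Nat.zero_sub, mul_zero, add_zero] at h
    nlinarith
  simp only [Nat.add_sub_cancel] at h
  -- If `d ≤ 2r`, `T < N` suffices; otherwise `d ≤ 2 (d - r + 1)` and `2 (r + 2) ≤ 4r + 2`.
  rcases le_or_gt d (2 * k + 2) with hd | hd
  · nlinarith
  · obtain ⟨e, rfl⟩ : ∃ e, d = k + e := ⟨d - k, by omega⟩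
    nlinarith

section Bootstrap

variable {d r : ℕ} {A : Set (Cube d)}

lemma boot_mono : Monotone (boot d r A) :=
  monotone_nat_of_le_succ fun _ => Set.subset_union_left

lemma le_ncard_of_mem_boot_succ {s : ℕ} {x : Cube d} (hx : x ∈ boot d r A (s + 1))
    (hx' : x ∉ boot d r A s) :
    r ≤ {u | hammingDist u x = 1 ∧ u ∈ boot d r A s}.ncard :=
  hx.resolve_left hx'

lemma ncard_lt_of_notMem_boot_succ {s : ℕ} {x : Cube d} (hx : x ∉ boot d r A (s + 1)) :
    {u | hammingDist u x = 1 ∧ u ∈ boot d r A s}.ncard < r :=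
  not_le.mp fun h => hx (Or.inr h)

lemma Percolates.mem_boot_iff_infTime_le (hA : Percolates d r A) {s : ℕ} {v : Cube d} :
    v ∈ boot d r A s ↔ infTime d r A v ≤ s := by
  refine ⟨fun h => Nat.sInf_le h, fun h => boot_mono h ?_⟩
  obtain ⟨t, ht⟩ := hA
  exact Nat.sInf_mem (s := {t | v ∈ boot d r A t})
    ⟨t, show v ∈ boot d r A t from ht ▸ Set.mem_univ v⟩

lemma Percolates.exists_adj_infTime_eq (hr : 1 ≤ r) (hA : Percolates d r A) {x : Cube d}
    {s : ℕ} (hx : infTime d r A x = s + 1) :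
    ∃ y, hammingDist y x = 1 ∧ infTime d r A y = s := by
  have hnbrs := le_ncard_of_mem_boot_succ (hA.mem_boot_iff_infTime_le.mpr hx.le)
    (by rw [hA.mem_boot_iff_infTime_le]; omega)
  cases s with
  | zero =>
    obtain ⟨y, hyx, hy⟩ := Set.nonempty_of_ncard_ne_zero
      (Nat.one_le_iff_ne_zero.mp (hr.trans hnbrs))
    exact ⟨y, hyx, Nat.le_zero.mp (hA.mem_boot_iff_infTime_le.mp hy)⟩
  | succ s =>
    have hfew := ncard_lt_of_notMem_boot_succ (s := s) (x := x)
      (hA.mem_boot_iff_infTime_le.not.mpr (by omega))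
    obtain ⟨y, ⟨hyx, hy⟩, hy_new⟩ := Set.not_subset.mp fun hsub =>
      (Set.ncard_le_ncard hsub (Set.toFinite _)).not_gt (hfew.trans_le hnbrs)
    rw [hA.mem_boot_iff_infTime_le] at hy
    have : ¬ infTime d r A y ≤ s := fun h => hy_new ⟨hyx, hA.mem_boot_iff_infTime_le.mpr h⟩
    exact ⟨y, hyx, by omega⟩

lemma Percolates.exists_infTime_eq_of_le (hr : 1 ≤ r) (hA : Percolates d r A) {x : Cube d}
    {s : ℕ} (hs : s ≤ infTime d r A x) : ∃ y, infTime d r A y = s := by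
  induction hx : infTime d r A x generalizing x with
  | zero => exact ⟨x, by omega⟩
  | succ n ih =>
    rcases (hx ▸ hs).eq_or_lt with rfl | hlt
    · exact ⟨x, hx⟩
    · obtain ⟨y, -, hy⟩ := hA.exists_adj_infTime_eq hr hx
      exact ih (hy ▸ Nat.le_of_lt_succ hlt) hy

lemma Percolates.exists_infTime_eq_percTime (hA : Percolates d r A) :
    ∃ x, infTime d r A x = percTime d r A := by
  have hfull : boot d r A (percTime d r A) = Set.univ := Nat.sInf_mem hA
  have hle : ∀ x, infTime d r A x ≤ percTime d r A := fun x =>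
    hA.mem_boot_iff_infTime_le.mp (hfull ▸ Set.mem_univ x)
  rcases Nat.eq_zero_or_pos (percTime d r A) with h0 | hpos
  · exact ⟨fun _ => false, by have := hle fun _ => false; omega⟩
  · have hnfull : boot d r A (percTime d r A - 1) ≠ Set.univ :=
      Nat.notMem_of_lt_sInf (Nat.sub_one_lt hpos.ne')
    obtain ⟨x, hx⟩ := (Set.ne_univ_iff_exists_notMem _).mp hnfull
    exact ⟨x, le_antisymm (hle x) (by rw [hA.mem_boot_iff_infTime_le] at hx; omega)⟩

lemma Percolates.exists_seq_infTime_eq (hr : 1 ≤ r) (hA : Percolates d r A) :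
    ∃ u : ℕ → Cube d, ∀ s ≤ percTime d r A, infTime d r A (u s) = s := by
  obtain ⟨x, hx⟩ := hA.exists_infTime_eq_percTime
  have hex : ∀ s, ∃ y, s ≤ percTime d r A → infTime d r A y = s := fun s => by
    by_cases hs : s ≤ percTime d r A
    · obtain ⟨y, hy⟩ := hA.exists_infTime_eq_of_le hr (hx ▸ hs)
      exact ⟨y, fun _ => hy⟩
    · exact ⟨x, fun h => absurd h hs⟩
  choose u hu using hex
  exact ⟨u, hu⟩

lemma succ_le_two_pow_of_infTime_eq {T : ℕ} {u : ℕ → Cube d}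
    (hu : ∀ s ≤ T, infTime d r A (u s) = s) : T + 1 ≤ 2 ^ d := by
  have hinj : Set.InjOn u (range (T + 1)) := by
    intro a ha b hb hab
    rw [coe_range, Set.mem_Iio] at ha hb
    rw [← hu a (by omega), ← hu b (by omega), hab]
  simpa using card_le_card_of_injOn u (fun s _ => mem_univ (u s)) hinj

lemma Percolates.card_le_of_infTime_add_two_le (hA : Percolates d r A) {x : Cube d}
    {F : Finset (Cube d)}
    (hF : ∀ y ∈ F, hammingDist y x = 1 ∧ infTime d r A y + 2 ≤ infTime d r A x) :
    #F ≤ r - 1 := by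
  obtain hx | ⟨s, hs⟩ : infTime d r A x < 2 ∨ ∃ s, infTime d r A x = s + 2 :=
    (lt_or_ge _ 2).imp_right fun h => ⟨_, (Nat.sub_add_cancel h).symm⟩
  · have : F = ∅ := eq_empty_of_forall_notMem fun y hy => by have := (hF y hy).2; omega
    simp [this]
  · have hsub : (F : Set (Cube d)) ⊆ {u | hammingDist u x = 1 ∧ u ∈ boot d r A s} :=
      fun y hy => ⟨(hF y hy).1, hA.mem_boot_iff_infTime_le.mpr (by have := (hF y hy).2; omega)⟩
    have hfew := ncard_lt_of_notMem_boot_succ (s := s) (x := x)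
      (hA.mem_boot_iff_infTime_le.not.mpr (by omega))
    have := (Set.ncard_le_ncard hsub (Set.toFinite _)).trans_lt hfew
    rw [Set.ncard_coe_finset] at this
    omega

lemma Percolates.card_adj_le_infTime_add_one (hr : 1 ≤ r) (hA : Percolates d r A) {T : ℕ}
    {u : ℕ → Cube d} (hu : ∀ s ≤ T, infTime d r A (u s) = s) (v : Cube d) :
    #{s ∈ range (T + 1) | hammingDist v (u s) = 1 ∧ s ≤ infTime d r A v + 1} ≤ r + 2 := by
  set before := {s ∈ range (T + 1) | hammingDist v (u s) = 1 ∧ s + 2 ≤ infTime d r A v}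
  have hinj : Set.InjOn u before := fun a ha b hb hab => by
    simp only [before, coe_filter, mem_range, Set.mem_ofPred_eq] at ha hb
    rw [← hu a (by omega), ← hu b (by omega), hab]
  have hbefore : #before ≤ r - 1 := by
    rw [← card_image_of_injOn hinj]
    refine hA.card_le_of_infTime_add_two_le (x := v) fun y hy => ?_
    obtain ⟨s, hs, rfl⟩ := mem_image.mp hy
    simp only [before, mem_filter, mem_range] at hs
    rw [hammingDist_comm, hu s (by omega)]
    exact hs.2
  calc #{s ∈ range (T + 1) | hammingDist v (u s) = 1 ∧ s ≤ infTime d r A v + 1}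
      ≤ #(before ∪ Icc (infTime d r A v - 1) (infTime d r A v + 1)) := by
        refine card_le_card fun s hs => ?_
        simp only [before, mem_union, mem_filter, mem_range, mem_Icc] at hs ⊢
        omega
    _ ≤ #before + #(Icc (infTime d r A v - 1) (infTime d r A v + 1)) := card_union_le _ _
    _ ≤ r - 1 + 3 := by
        refine add_le_add hbefore ?_
        rw [Nat.card_Icc]
        omega
    _ ≤ r + 2 := by omega

lemma Percolates.succ_mul_le (hr : 1 ≤ r) (hA : Percolates d r A) {T : ℕ} {u : ℕ → Cube d}
    (hu : ∀ s ≤ T, infTime d r A (u s) = s) :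
    (T + 1) * d ≤ (r + 2) * 2 ^ d + (T + 1) * (r - 1) := by
  let late (s : ℕ) : Finset (Cube d) :=
    {v | hammingDist v (u s) = 1 ∧ s ≤ infTime d r A v + 1}
  let early (s : ℕ) : Finset (Cube d) :=
    {v | hammingDist v (u s) = 1 ∧ ¬ s ≤ infTime d r A v + 1}
  have hsplit : ∀ s, #(late s) + #(early s) = d := fun s => by
    have := card_filter_add_card_filter_not (s := {v | hammingDist v (u s) = 1})
      (fun v => s ≤ infTime d r A v + 1)
    rwa [filter_filter, filter_filter, card_hammingDist_eq, Nat.choose_one_right] at this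
  have hlate : ∑ s ∈ range (T + 1), #(late s) ≤ (r + 2) * 2 ^ d :=
    calc ∑ s ∈ range (T + 1), #(late s)
        = ∑ v, #{s ∈ range (T + 1) |
            hammingDist v (u s) = 1 ∧ s ≤ infTime d r A v + 1} := by
          simp only [late, card_filter]
          exact sum_comm
      _ ≤ ∑ _v : Cube d, (r + 2) :=
          sum_le_sum fun v _ => hA.card_adj_le_infTime_add_one hr hu v
      _ = (r + 2) * 2 ^ d := by simp [mul_comm]
  have hearly : ∑ s ∈ range (T + 1), #(early s) ≤ (T + 1) * (r - 1) :=
    calc ∑ s ∈ range (T + 1), #(early s) ≤ ∑ _s ∈ range (T + 1), (r - 1) :=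
          sum_le_sum fun s hs => hA.card_le_of_infTime_add_two_le fun v hv => by
            simp only [early, mem_filter, mem_univ, true_and] at hv
            exact ⟨hv.1, by rw [hu s (by simpa [Nat.lt_succ_iff] using hs)]; omega⟩
      _ = (T + 1) * (r - 1) := by simp
  calc (T + 1) * d = ∑ s ∈ range (T + 1), (#(late s) + #(early s)) := by simp [hsplit]
    _ ≤ (r + 2) * 2 ^ d + (T + 1) * (r - 1) := by
      rw [sum_add_distrib]
      exact add_le_add hlate hearly

lemma Percolates.percTime_lt_and_mul_le (hr : 1 ≤ r) (hA : Percolates d r A) :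
    percTime d r A < 2 ^ d ∧ percTime d r A * d ≤ (4 * r + 2) * 2 ^ d := by
  obtain ⟨u, hu⟩ := hA.exists_seq_infTime_eq hr
  have hcard := succ_le_two_pow_of_infTime_eq hu
  exact ⟨hcard, mul_le_of_succ_mul_le hcard (hA.succ_mul_le hr hu)⟩

lemma exists_percTime_eq_maxPercTime (hr : 1 ≤ r) :
    ∃ A, Percolates d r A ∧ percTime d r A = maxPercTime d r := by
  let times := {T | ∃ A : Set (Cube d), Percolates d r A ∧ percTime d r A = T}
  have hne : times.Nonempty := ⟨0, Set.univ, ⟨0, rfl⟩, Nat.sInf_eq_zero.mpr (Or.inl rfl)⟩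
  have hbdd : BddAbove times := by
    refine ⟨2 ^ d, ?_⟩
    rintro _ ⟨A, hA, rfl⟩
    exact (hA.percTime_lt_and_mul_le hr).1.le
  exact Nat.sSup_mem hne hbdd

end Bootstrap

theorem stmt3_general (r d : ℕ) (hr : 3 ≤ r) :
    (maxPercTime d r : ℝ) ≤ (4 * r + 2) * 2 ^ d / d := by
  obtain ⟨A, hA, hT⟩ := exists_percTime_eq_maxPercTime (d := d) (by omega : 1 ≤ r)
  obtain ⟨hlt, hmul⟩ := hA.percTime_lt_and_mul_le (by omega)
  rw [← hT]
  rcases Nat.eq_zero_or_pos d with rfl | hd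
  · simp_all
  · rw [le_div_iff₀ (by exact_mod_cast hd)]
    exact_mod_cast hmul

/-- For every `r ≥ 3` and every `d ≥ r`, `M_r(d) ≤ (4r+2)·2^d/d`. -/
theorem stmt3 (r d : ℕ) (hr : 3 ≤ r) (hd : r ≤ d) :
    (maxPercTime d r : ℝ) ≤ (4 * r + 2) * 2 ^ d / d :=
  stmt3_general r d hr
end

section
/- Let r ≥ 1 and let A ⊆ Q_d be a set that percolates under r-neighbour bootstrap percolation; for each vertex v let t_v = min{t : v ∈ A_t} be its infection time. Call a vertex v bad if it has at least d/2 neighbours u with |t_v − t_u| ≥ 2. Then the number of bad vertices is at most 2^{d+2}(r−1)/d. -/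
/-!
A vertex infected at time `t ≥ 2` was not infected at time `t - 1`, so at most `r - 1` of its
neighbours were infected by time `t - 2`. An edge whose endpoints' infection times differ by at
least `2` is counted in this way from its later endpoint, so there are at most `2^d (r - 1)` such
edges and they have at most `2^(d+1) (r - 1)` endpoint incidences. Each bad vertex accounts for
at least `d / 2` of these incidences.
-/

open Finset

section Bootstrap

variable {d r : ℕ} {A : Set (Cube d)}

lemma mem_boot_infTime (hA : Percolates d r A) (v : Cube d) :
    v ∈ boot d r A (infTime d r A v) := by
  obtain ⟨T, hT⟩ := hA
  exact Nat.sInf_mem (s := {t | v ∈ boot d r A t}) ⟨T, by simp [hT]⟩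

lemma ncard_neighbours_infected_two_before_le (hA : Percolates d r A) (v : Cube d) :
    {u : Cube d | hammingDist u v = 1 ∧ infTime d r A u + 2 ≤ infTime d r A v}.ncard
      ≤ r - 1 := by
  set t := infTime d r A
  rcases Nat.lt_or_ge (t v) 2 with hv | hv
  · have hempty : {u : Cube d | hammingDist u v = 1 ∧ t u + 2 ≤ t v} = ∅ :=
      Set.eq_empty_of_forall_notMem fun u hu => by have := hu.2; omega
    simp [hempty]
  have hnot : v ∉ bootStep d r (boot d r A (t v - 2)) := fun h => by
    have hle : t v ≤ t v - 1 := Nat.sInf_le (by rwa [show t v - 1 = t v - 2 + 1 by omega])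
    omega
  have hsub : {u : Cube d | hammingDist u v = 1 ∧ t u + 2 ≤ t v}
      ⊆ {u | hammingDist u v = 1 ∧ u ∈ boot d r A (t v - 2)} := fun u ⟨hadj, hu⟩ =>
    ⟨hadj, boot_mono (show t u ≤ t v - 2 by omega) (mem_boot_infTime hA u)⟩
  have hlt : {u | hammingDist u v = 1 ∧ u ∈ boot d r A (t v - 2)}.ncard < r :=
    lt_of_not_ge fun h => hnot (Set.mem_union_right _ h)
  exact Nat.le_sub_one_of_lt ((Set.ncard_le_ncard hsub).trans_lt hlt)

end Bootstrap

section Counting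

variable {α : Type*} [Fintype α]

lemma sum_card_filter_or_swap [DecidableEq α] (P : α → α → Prop) [DecidableRel P]
    (hP : ∀ u v, P u v → ¬ P v u) :
    ∑ v, #{u | P u v ∨ P v u} = 2 * ∑ v, #{u | P u v} := by
  have hswap : ∑ v, #{u | P v u} = ∑ v, #{u | P u v} := by
    simp only [card_filter]
    exact sum_comm
  have hsplit : ∀ v, #{u | P u v ∨ P v u} = #{u | P u v} + #{u | P v u} := fun v => by
    rw [filter_or, card_union_of_disjoint
      (disjoint_filter.2 fun u _ huv => hP u v huv)]
  simp only [hsplit, sum_add_distrib, hswap, two_mul]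

lemma ncard_setOf_le_mul_le_sum (f : α → ℝ) (hf : ∀ v, 0 ≤ f v) (c : ℝ) :
    ({v | c ≤ f v}.ncard : ℝ) * c ≤ ∑ v, f v := by
  classical
  calc ({v | c ≤ f v}.ncard : ℝ) * c = ∑ v, if c ≤ f v then c else 0 := by
        rw [sum_ite, sum_const_zero, add_zero, sum_const, nsmul_eq_mul,
          Set.ncard_eq_toFinset_card', Set.toFinset_ofPred]
    _ ≤ ∑ v, f v := sum_le_sum fun v _ => by split_ifs with h <;> simp [h, hf]

end Counting

/-- If `A` percolates under `r`-neighbour bootstrap percolation, and a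
vertex `v` is called bad when it has at least `d/2` neighbours `u` with `|t_v − t_u| ≥ 2`,
then the number of bad vertices is at most `2^{d+2}(r−1)/d`. -/
theorem stmt10 (d r : ℕ) (hd : 1 ≤ d) (hr : 1 ≤ r) (A : Set (Cube d))
    (hA : Percolates d r A) :
    ({v : Cube d | (d : ℝ) / 2 ≤
        ({u : Cube d | hammingDist u v = 1 ∧
          (infTime d r A u + 2 ≤ infTime d r A v ∨
            infTime d r A v + 2 ≤ infTime d r A u)}.ncard : ℝ)}.ncard : ℝ)
      ≤ 2 ^ (d + 2) * ((r : ℝ) - 1) / d := by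
  classical
  set t := infTime d r A
  let P : Cube d → Cube d → Prop := fun u v => hammingDist u v = 1 ∧ t u + 2 ≤ t v
  have hgap : ∀ v, {u | hammingDist u v = 1 ∧ (t u + 2 ≤ t v ∨ t v + 2 ≤ t u)}.ncard
      = #{u | P u v ∨ P v u} := fun v => by
    rw [Set.ncard_eq_toFinset_card', Set.toFinset_ofPred]
    congr 1; ext u; simp only [mem_filter, P, hammingDist_comm v u]; tauto
  have htotal : ∑ v, #{u | P u v ∨ P v u} ≤ 2 * (2 ^ d * (r - 1)) := by
    rw [sum_card_filter_or_swap P fun u v huv hvu => by omega]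
    have hP : ∀ v, #{u | P u v} ≤ r - 1 := fun v => by
      simpa [Set.ncard_eq_toFinset_card'] using ncard_neighbours_infected_two_before_le hA v
    simpa using Nat.mul_le_mul_left 2 (sum_le_card_nsmul univ _ _ fun v _ => hP v)
  have hd0 : (0 : ℝ) < d := by exact_mod_cast hd
  simp only [hgap]
  rw [le_div_iff₀ hd0]
  calc _ = 2 * (_ * ((d : ℝ) / 2)) := by ring
    _ ≤ 2 * ∑ v, (#{u | P u v ∨ P v u} : ℝ) := by
        gcongr; exact ncard_setOf_le_mul_le_sum _ (fun _ => by positivity) _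
    _ ≤ 2 * (2 * (2 ^ d * ((r : ℝ) - 1))) := by
        have hcast : ((2 * (2 ^ d * (r - 1)) : ℕ) : ℝ) = 2 * (2 ^ d * ((r : ℝ) - 1)) := by
          push_cast [Nat.cast_sub hr]; ring
        gcongr
        rw [← hcast]
        exact_mod_cast htotal
    _ = 2 ^ (d + 2) * ((r : ℝ) - 1) := by ring
end

section
/- Let d ≥ 15 be odd, d'' = d − 9, and let S be a 3-snake of length T in Q_{d''} satisfying the five snake conditions. Then the set I' = I_0 ∪ J_1 ∪ J_2 ∪ J_3 is stable under 3-neighbour bootstrap percolation on Q_d: no vertex outside I' has three or more neighbours in I' (equivalently, A_1 = A_0 for the process started from A_0 = I'). -/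
open Finset Function

section Hypercube

variable {n : ℕ}

lemma exists_eq_update_of_hammingDist_eq_one {u v : Cube n} (h : hammingDist u v = 1) :
    ∃ m, u = update v m (!v m) := by
  obtain ⟨m, hm⟩ := card_eq_one.1 h
  have hdiff : ∀ c, u c ≠ v c ↔ c = m := fun c => by
    simpa using congrArg (c ∈ ·) hm
  refine ⟨m, funext fun c => ?_⟩
  by_cases hc : c = m
  · subst hc
    simpa [Bool.eq_not_iff] using (hdiff c).2 rfl
  · rw [update_of_ne hc]
    exact not_not.1 (mt (hdiff c).1 hc)

def DiffersExactlyAt (u u' : Cube n) (m m' : Fin n) : Prop :=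
  ∀ c, u c ≠ u' c ↔ c = m ∨ c = m'

lemma differsExactlyAt_update (v : Cube n) {m m' : Fin n} (hmm : m ≠ m') :
    DiffersExactlyAt (update v m (!v m)) (update v m' (!v m')) m m' := fun c => by
  by_cases h : c = m
  · subst h; simp [update_of_ne hmm]
  by_cases h' : c = m'
  · subst h'; simp [update_of_ne h]
  · simp [h, h']

namespace DiffersExactlyAt

variable {u u' : Cube n} {m m' : Fin n}

lemma symm (h : DiffersExactlyAt u u' m m') : DiffersExactlyAt u' u m m' :=
  fun c => ne_comm.trans (h c)

lemma val_eq_or_eq (h : DiffersExactlyAt u u' m m') {k : ℕ} (hk : k < n)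
    (hne : u ⟨k, hk⟩ ≠ u' ⟨k, hk⟩) : k = m ∨ k = m' := by
  simpa [Fin.ext_iff] using (h _).1 hne

lemma apply_eq (h : DiffersExactlyAt u u' m m') {k : ℕ} (hk : k < n) (hm : k ≠ m)
    (hm' : k ≠ m') : u ⟨k, hk⟩ = u' ⟨k, hk⟩ :=
  not_not.1 fun hne => (h.val_eq_or_eq hk hne).elim hm hm'

end DiffersExactlyAt

lemma card_filter_le_of_val_mem {P : Fin n → Prop} [DecidablePred P] {t : Finset ℕ}
    (h : ∀ c, P c → c.val ∈ t) : #{c | P c} ≤ #t :=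
  card_le_card_of_injOn Fin.val (fun c hc => h c (mem_filter.1 hc).2) Fin.val_injective.injOn

lemma hammingDist_le_two {x x' : Cube n} {a b : ℕ}
    (h : ∀ c : Fin n, x c ≠ x' c → c.val = a ∨ c.val = b) : hammingDist x x' ≤ 2 :=
  (card_filter_le_of_val_mem (t := {a, b}) (by simpa using h)).trans card_le_two

lemma wt_ofOnes_le (s : Finset ℕ) : wt (ofOnes n s) ≤ #s :=
  card_filter_le_of_val_mem (by simp [ofOnes])

end Hypercube

section SnakeTail

variable {n T : ℕ} {S : ℕ → Cube n}

lemma snakeTail_disjoint (hS : IsSnake n 3 T S) {i i' : ℕ} (hii : i % 3 ≠ i' % 3) :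
    Disjoint (SnakeTail n T S i) (SnakeTail n T S i') := by
  rw [Set.disjoint_left]
  rintro x ⟨j, hj, rfl⟩ ⟨j', hj', hx⟩
  have := hS.2.1 _ _ (by omega) (by omega) hx
  omega

lemma three_le_hammingDist_of_mem_snakeTail (hS : IsSnake n 3 T S) {i : ℕ} {x x' : Cube n}
    (hx : x ∈ SnakeTail n T S i) (hx' : x' ∈ SnakeTail n T S i) (hne : x ≠ x') :
    3 ≤ hammingDist x x' := by
  obtain ⟨j, hj, rfl⟩ := hx
  obtain ⟨j', hj', rfl⟩ := hx'
  rcases lt_trichotomy j j' with h | rfl | h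
  · rw [hammingDist_comm]
    exact hS.2.2 _ _ (by omega) (by omega)
  · exact absurd rfl hne
  · exact hS.2.2 _ _ (by omega) (by omega)

lemma ofOnes_empty_notMem_snakeTail (hS : IsSnake n 3 T S) (hc : SnakeConds n T S) {i : ℕ}
    (hi : 1 ≤ i) : ofOnes n ∅ ∉ SnakeTail n T S i := by
  rintro ⟨j, hj, hx⟩
  have := hS.2.1 _ _ (by omega) le_rfl (hx.symm.trans hc.1.symm)
  omega

-- `S_{T-1}, S_{T-2}, S_{T-3}` are `1, 101, 10101`; every earlier vertex has weight `> 3`.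
lemma ofOnes_pair_notMem_snakeTail (hc : SnakeConds n T S) {i c : ℕ} (hi : 1 ≤ i)
    (hcn : c + 1 < n) : ofOnes n {c, c + 1} ∉ SnakeTail n T S i := by
  rintro ⟨j, hj, hx⟩
  obtain ⟨-, h1, h2, h3, hwt⟩ := hc
  by_cases hlate : T - 3 ≤ T - i - 3 * j
  · have hc0 := congrFun hx ⟨c, by omega⟩
    have hc1 := congrFun hx ⟨c + 1, hcn⟩
    have ht : T - i - 3 * j = T - 1 ∨ T - i - 3 * j = T - 2 ∨ T - i - 3 * j = T - 3 := by omega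
    rcases ht with ht | ht | ht <;> simp [ht, h1, h2, h3, ofOnes] at hc0 hc1 <;> omega
  · have hgt := hwt (T - i - 3 * j) (by omega)
    rw [← hx] at hgt
    have := (wt_ofOnes_le (n := n) {c, c + 1}).trans card_le_two
    omega

end SnakeTail

section Pieces

variable {d T : ℕ} {S : ℕ → Cube (d - 9)} {u u' : Cube d} {m m' : Fin d}

lemma embed9_apply_of_lt {ys : Finset ℕ} {x : Cube (d - 9)} {k : ℕ} (hk : k < d) (h9 : k < 9) :
    embed9 d ys x ⟨k, hk⟩ = decide (k ∈ ys) :=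
  dif_pos h9

lemma embed9_apply_add_nine {ys : Finset ℕ} {x : Cube (d - 9)} {c : Fin (d - 9)}
    (hc : c.val + 9 < d) : embed9 d ys x ⟨c + 9, hc⟩ = x c := by
  simp [embed9]

lemma exists_of_mem_I0 (hu : u ∈ I0 d T S) :
    ∃ i p x, 1 ≤ i ∧ i ≤ 3 ∧ (p = 2 * i + 1 ∨ p = 2 * i + 2) ∧
      x ∈ SnakeTail (d - 9) T S i ∧ u = embed9 d {p} x := by
  obtain ⟨i, hi, x, hx, rfl | rfl⟩ := hu <;>
    simp only [Set.mem_insert_iff, Set.mem_singleton_iff] at hi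
  · exact ⟨i, _, x, by omega, by omega, Or.inl rfl, hx, rfl⟩
  · exact ⟨i, _, x, by omega, by omega, Or.inr rfl, hx, rfl⟩

lemma exists_of_mem_J2 (hu : u ∈ J2 d) : ∃ b ≤ 1, u = ofOnes d {b, 2} := by
  rcases hu with rfl | rfl
  exacts [⟨0, zero_le_one, rfl⟩, ⟨1, le_rfl, rfl⟩]

lemma exists_of_mem_J3 (hu : u ∈ J3 d) :
    ∃ b ≤ 1, ∃ l, 2 * l + 2 ≤ d - 3 ∧ u = ofOnes d {b, 3 + 2 * l, 4 + 2 * l} := by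
  obtain ⟨l, hl, rfl | rfl⟩ := hu
  exacts [⟨0, zero_le_one, l, hl, rfl⟩, ⟨1, le_rfl, l, hl, rfl⟩]

lemma apply_eq_false_of_mem_I0 (hu : u ∈ I0 d T S) {c : Fin d} (hc : c.val < 3) :
    u c = false := by
  obtain ⟨i, p, x, hi, -, hp, -, rfl⟩ := exists_of_mem_I0 hu
  simp only [embed9, dif_pos (show c.val < 9 by omega), mem_singleton, decide_eq_false_iff_not]
  omega

lemma exists_block_of_mem_I0 (hd : 9 ≤ d) (hS : IsSnake (d - 9) 3 T S) (hu : u ∈ I0 d T S)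
    (hu' : u' ∈ I0 d T S) (hD : DiffersExactlyAt u u' m m') :
    ∃ a, 1 ≤ a ∧ a ≤ 3 ∧ (m.val = 2 * a + 1 ∨ m.val = 2 * a + 2) ∧
      (m'.val = 2 * a + 1 ∨ m'.val = 2 * a + 2) := by
  obtain ⟨i, p, x, hi1, hi3, hp, hx, rfl⟩ := exists_of_mem_I0 hu
  obtain ⟨i', p', x', hi1', hi3', hp', hx', rfl⟩ := exists_of_mem_I0 hu'
  by_cases hpp : p = p'
  · -- same `p`: the last `d - 9` coordinates are distinct vertices of one `Sⁱ` differing in at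
    -- most two coordinates
    subst hpp
    obtain rfl : i = i' := by omega
    have hxx : x ≠ x' := by
      rintro rfl
      exact (hD m).2 (Or.inl rfl) rfl
    have hle : hammingDist x x' ≤ 2 :=
      hammingDist_le_two (a := m - 9) (b := m' - 9) fun c hc => by
        have := hD.val_eq_or_eq (k := c + 9) (by omega)
          (by rwa [embed9_apply_add_nine, embed9_apply_add_nine])
        omega
    have := three_le_hammingDist_of_mem_snakeTail hS hx hx' hxx
    omega
  · -- different `p`: `u, u'` differ at `p` and `p'`, hence nowhere in the last `d - 9` coordinates
    have hmp := hD.val_eq_or_eq (k := p) (by omega)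
      (by simp (disch := omega) [embed9_apply_of_lt, hpp])
    have hmp' := hD.val_eq_or_eq (k := p') (by omega)
      (by simp (disch := omega) [embed9_apply_of_lt, Ne.symm hpp])
    obtain rfl : x = x' := funext fun c => by
      have := hD.apply_eq (k := c + 9) (by omega) (by omega) (by omega)
      rwa [embed9_apply_add_nine, embed9_apply_add_nine] at this
    obtain rfl : i = i' := by
      by_contra hii
      exact Set.disjoint_left.1 (snakeTail_disjoint hS (by omega)) hx hx'
    exact ⟨i, hi1, hi3, by omega⟩

lemma not_differsExactlyAt_of_mem_I0_of_mem_J2 (hd : 9 ≤ d) (hu : u ∈ I0 d T S)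
    (hu' : u' ∈ J2 d) : ¬ DiffersExactlyAt u u' m m' := by
  intro hD
  obtain ⟨i, p, x, hi1, hi3, hp, -, rfl⟩ := exists_of_mem_I0 hu
  obtain ⟨b, hb, rfl⟩ := exists_of_mem_J2 hu'
  -- without `Bool.decide_or` simp leaves the membership tests as propositions `omega` can read
  have hmb := hD.val_eq_or_eq (k := b) (by omega)
    (by simp (disch := omega) [embed9_apply_of_lt, ofOnes, -Bool.decide_or]; omega)
  have hm2 := hD.val_eq_or_eq (k := 2) (by omega)
    (by simp (disch := omega) [embed9_apply_of_lt, ofOnes, -Bool.decide_or]; omega)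
  have hmp := hD.val_eq_or_eq (k := p) (by omega)
    (by simp (disch := omega) [embed9_apply_of_lt, ofOnes, -Bool.decide_or]; omega)
  omega

lemma not_differsExactlyAt_of_mem_I0_of_mem_J3 (hd : 9 ≤ d) (hS : IsSnake (d - 9) 3 T S)
    (hc : SnakeConds (d - 9) T S) (hu : u ∈ I0 d T S) (hu' : u' ∈ J3 d) :
    ¬ DiffersExactlyAt u u' m m' := by
  intro hD
  obtain ⟨i, p, x, hi1, hi3, hp, hx, rfl⟩ := exists_of_mem_I0 hu
  obtain ⟨b, hb, l, hl, rfl⟩ := exists_of_mem_J3 hu'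
  have hmb := hD.val_eq_or_eq (k := b) (by omega)
    (by simp (disch := omega) [embed9_apply_of_lt, ofOnes, -Bool.decide_or]; omega)
  by_cases hpq : p = 3 + 2 * l ∨ p = 4 + 2 * l
  · -- the other coordinate `r` of the pair is below `9` as well, so `u, u'` differ only at `b`
    -- and `r`, which forces `x = 0`
    obtain ⟨r, hrp, hrq, hr9⟩ :
        ∃ r, r ≠ p ∧ (r = 3 + 2 * l ∨ r = 4 + 2 * l) ∧ r < 9 := by
      rcases hpq with h | h
      exacts [⟨4 + 2 * l, by omega, Or.inr rfl, by omega⟩,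
        ⟨3 + 2 * l, by omega, Or.inl rfl, by omega⟩]
    have hmr := hD.val_eq_or_eq (k := r) (by omega)
      (by simp (disch := omega) [embed9_apply_of_lt, ofOnes, -Bool.decide_or]; omega)
    have hx0 : x = ofOnes (d - 9) ∅ := funext fun c => by
      have := hD.apply_eq (k := c + 9) (by omega) (by omega) (by omega)
      rw [embed9_apply_add_nine] at this
      simp only [this, ofOnes, mem_insert, mem_singleton, notMem_empty, decide_eq_decide,
        iff_false]
      omega
    exact ofOnes_empty_notMem_snakeTail hS hc hi1 (hx0 ▸ hx)
  · have hmp := hD.val_eq_or_eq (k := p) (by omega)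
      (by simp (disch := omega) [embed9_apply_of_lt, ofOnes, -Bool.decide_or]; omega)
    -- `u, u'` differ at `b` and `p`, so the pair lies beyond coordinate `8` and `x = 0…0110…0`
    have hq : 9 ≤ 3 + 2 * l := by
      by_contra
      have := hD.val_eq_or_eq (k := 3 + 2 * l) (by omega)
        (by simp (disch := omega) [embed9_apply_of_lt, ofOnes, -Bool.decide_or]; omega)
      omega
    have hx2 : x = ofOnes (d - 9) {2 * l - 6, 2 * l - 6 + 1} := funext fun c => by
      have := hD.apply_eq (k := c + 9) (by omega) (by omega) (by omega)
      rw [embed9_apply_add_nine] at this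
      simp only [this, ofOnes, mem_insert, mem_singleton, decide_eq_decide]
      omega
    exact ofOnes_pair_notMem_snakeTail hc hi1 (by omega) (hx2 ▸ hx)

lemma not_differsExactlyAt_of_mem_J2_of_mem_J3 (hu : u ∈ J2 d) (hu' : u' ∈ J3 d) :
    ¬ DiffersExactlyAt u u' m m' := by
  intro hD
  obtain ⟨b, hb, rfl⟩ := exists_of_mem_J2 hu
  obtain ⟨b', hb', l, hl, rfl⟩ := exists_of_mem_J3 hu'
  have hm2 := hD.val_eq_or_eq (k := 2) (by omega)
      (by simp [ofOnes, -Bool.decide_or]; omega)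
  have hmq := hD.val_eq_or_eq (k := 3 + 2 * l) (by omega)
      (by simp [ofOnes, -Bool.decide_or]; omega)
  have hmq' := hD.val_eq_or_eq (k := 4 + 2 * l) (by omega)
      (by simp [ofOnes, -Bool.decide_or]; omega)
  omega

lemma val_le_one_of_mem_J2 (hd : 2 ≤ d) (hu : u ∈ J2 d) (hu' : u' ∈ J2 d)
    (hD : DiffersExactlyAt u u' m m') : m.val ≤ 1 ∧ m'.val ≤ 1 := by
  obtain ⟨b, hb, rfl⟩ := exists_of_mem_J2 hu
  obtain ⟨b', hb', rfl⟩ := exists_of_mem_J2 hu'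
  have hbb : b ≠ b' := by
    rintro rfl
    exact (hD m).2 (Or.inl rfl) rfl
  have hmb := hD.val_eq_or_eq (k := b) (by omega)
      (by simp [ofOnes, -Bool.decide_or]; omega)
  have hmb' := hD.val_eq_or_eq (k := b') (by omega)
      (by simp [ofOnes, -Bool.decide_or]; omega)
  omega

lemma val_le_one_of_mem_J3 (hu : u ∈ J3 d) (hu' : u' ∈ J3 d)
    (hD : DiffersExactlyAt u u' m m') : m.val ≤ 1 ∧ m'.val ≤ 1 := by
  obtain ⟨b, hb, l, hl, rfl⟩ := exists_of_mem_J3 hu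
  obtain ⟨b', hb', l', hl', rfl⟩ := exists_of_mem_J3 hu'
  by_cases hll : l = l'
  · subst hll
    have hbb : b ≠ b' := by
      rintro rfl
      exact (hD m).2 (Or.inl rfl) rfl
    have hmb := hD.val_eq_or_eq (k := b) (by omega)
      (by simp [ofOnes, -Bool.decide_or]; omega)
    have hmb' := hD.val_eq_or_eq (k := b') (by omega)
      (by simp [ofOnes, -Bool.decide_or]; omega)
    omega
  · have hmq := hD.val_eq_or_eq (k := 3 + 2 * l) (by omega)
      (by simp [ofOnes, -Bool.decide_or]; omega)
    have hmq' := hD.val_eq_or_eq (k := 4 + 2 * l) (by omega)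
      (by simp [ofOnes, -Bool.decide_or]; omega)
    have hmq'' := hD.val_eq_or_eq (k := 3 + 2 * l') (by omega)
      (by simp [ofOnes, -Bool.decide_or]; omega)
    omega

lemma val_le_one_or_exists_block (hd : 9 ≤ d) (hS : IsSnake (d - 9) 3 T S)
    (hc : SnakeConds (d - 9) T S) (hu : u ∈ I0 d T S ∪ J2 d ∪ J3 d)
    (hu' : u' ∈ I0 d T S ∪ J2 d ∪ J3 d) (hD : DiffersExactlyAt u u' m m') :
    (m.val ≤ 1 ∧ m'.val ≤ 1) ∨ (u ∈ I0 d T S ∧ ∃ a, 1 ≤ a ∧ a ≤ 3 ∧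
      (m.val = 2 * a + 1 ∨ m.val = 2 * a + 2) ∧
      (m'.val = 2 * a + 1 ∨ m'.val = 2 * a + 2)) := by
  rcases hu with (hu | hu) | hu <;> rcases hu' with (hu' | hu') | hu'
  · exact Or.inr ⟨hu, exists_block_of_mem_I0 hd hS hu hu' hD⟩
  · exact (not_differsExactlyAt_of_mem_I0_of_mem_J2 hd hu hu' hD).elim
  · exact (not_differsExactlyAt_of_mem_I0_of_mem_J3 hd hS hc hu hu' hD).elim
  · exact (not_differsExactlyAt_of_mem_I0_of_mem_J2 hd hu' hu hD.symm).elim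
  · exact Or.inl (val_le_one_of_mem_J2 (by omega) hu hu' hD)
  · exact (not_differsExactlyAt_of_mem_J2_of_mem_J3 hu hu' hD).elim
  · exact (not_differsExactlyAt_of_mem_I0_of_mem_J3 hd hS hc hu' hu hD.symm).elim
  · exact (not_differsExactlyAt_of_mem_J2_of_mem_J3 hu' hu hD.symm).elim
  · exact Or.inl (val_le_one_of_mem_J3 hu hu' hD)

end Pieces

section Neighbours

variable {d T : ℕ} {S : ℕ → Cube (d - 9)} {v : Cube d} {m m' m'' : Fin d}

lemma apply_eq_true_of_update_mem_J1 (h : update v m (!v m) ∈ J1 d) {c : Fin d}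
    (hc : c.val < 2) (hcm : c ≠ m) : v c = true := by
  simpa [update_of_ne hcm] using h c hc

lemma val_lt_two_of_update_mem_J1 (hv : v ∉ J1 d) (h : update v m (!v m) ∈ J1 d) :
    m.val < 2 := by
  by_contra hm
  exact hv fun c hc => apply_eq_true_of_update_mem_J1 h hc (by rintro rfl; omega)

lemma eq_of_update_mem_J1 (hv : v ∉ J1 d) (h : update v m (!v m) ∈ J1 d)
    (h' : update v m' (!v m') ∈ J1 d) : m = m' := by
  by_contra hmm
  have hm' := val_lt_two_of_update_mem_J1 hv h'
  simpa [apply_eq_true_of_update_mem_J1 h hm' (Ne.symm hmm)] using h' m' hm'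

lemma update_notMem_I0_of_update_mem_J1 (hv : v ∉ J1 d) (h : update v m (!v m) ∈ J1 d)
    (hm' : 3 ≤ m'.val) : update v m' (!v m') ∉ I0 d T S := by
  intro h'
  have hm := val_lt_two_of_update_mem_J1 hv h
  let c : Fin d := ⟨1 - m.val, by omega⟩
  have hcm : c ≠ m := fun hc => by simp [c, Fin.ext_iff] at hc; omega
  have hcm' : c ≠ m' := fun hc => by simp [c, Fin.ext_iff] at hc; omega
  have := apply_eq_false_of_mem_I0 h' (c := c) (by simp [c]; omega)
  simp [update_of_ne hcm', apply_eq_true_of_update_mem_J1 h (by simp [c]) hcm] at this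

lemma false_of_update_mem_J1_of_updates_mem (hd : 9 ≤ d) (hS : IsSnake (d - 9) 3 T S)
    (hc : SnakeConds (d - 9) T S) (hv : v ∉ J1 d) (h₁₂ : m ≠ m') (h₁₃ : m ≠ m'')
    (h₂₃ : m' ≠ m'') (h : update v m (!v m) ∈ J1 d)
    (h' : update v m' (!v m') ∈ I0 d T S ∪ J2 d ∪ J3 d)
    (h'' : update v m'' (!v m'') ∈ I0 d T S ∪ J2 d ∪ J3 d) : False := by
  have hm := val_lt_two_of_update_mem_J1 hv h
  rcases val_le_one_or_exists_block hd hS hc h' h'' (differsExactlyAt_update v h₂₃) with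
    ⟨hm', hm''⟩ | ⟨hI0, a, ha, -, hm', -⟩
  · have := Fin.val_injective.ne h₁₂
    have := Fin.val_injective.ne h₁₃
    have := Fin.val_injective.ne h₂₃
    omega
  · exact update_notMem_I0_of_update_mem_J1 hv h (by omega) hI0

lemma false_of_three_updates_mem (hd : 9 ≤ d) (hS : IsSnake (d - 9) 3 T S)
    (hc : SnakeConds (d - 9) T S) (h₁₂ : m ≠ m') (h₁₃ : m ≠ m'') (h₂₃ : m' ≠ m'')
    (h : update v m (!v m) ∈ I0 d T S ∪ J2 d ∪ J3 d)
    (h' : update v m' (!v m') ∈ I0 d T S ∪ J2 d ∪ J3 d)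
    (h'' : update v m'' (!v m'') ∈ I0 d T S ∪ J2 d ∪ J3 d) : False := by
  have := Fin.val_injective.ne h₁₂
  have := Fin.val_injective.ne h₁₃
  have := Fin.val_injective.ne h₂₃
  rcases val_le_one_or_exists_block hd hS hc h h' (differsExactlyAt_update v h₁₂) with
    _ | ⟨-, a, _⟩ <;>
  rcases val_le_one_or_exists_block hd hS hc h h'' (differsExactlyAt_update v h₁₃) with
    _ | ⟨-, b, _⟩ <;>
  rcases val_le_one_or_exists_block hd hS hc h' h'' (differsExactlyAt_update v h₂₃) with
    _ | ⟨-, c, _⟩ <;>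
  omega

lemma false_of_three_updates_mem_union (hd : 9 ≤ d) (hS : IsSnake (d - 9) 3 T S)
    (hc : SnakeConds (d - 9) T S) (hv : v ∉ J1 d) (h₁₂ : m ≠ m') (h₁₃ : m ≠ m'')
    (h₂₃ : m' ≠ m'') (h : update v m (!v m) ∈ I0 d T S ∪ J1 d ∪ J2 d ∪ J3 d)
    (h' : update v m' (!v m') ∈ I0 d T S ∪ J1 d ∪ J2 d ∪ J3 d)
    (h'' : update v m'' (!v m'') ∈ I0 d T S ∪ J1 d ∪ J2 d ∪ J3 d) : False := by
  have hsplit : ∀ u, u ∈ I0 d T S ∪ J1 d ∪ J2 d ∪ J3 d →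
      u ∈ J1 d ∨ u ∈ I0 d T S ∪ J2 d ∪ J3 d := by
    simp only [Set.mem_union]
    tauto
  rcases hsplit _ h with h | h <;> rcases hsplit _ h' with h' | h' <;>
    rcases hsplit _ h'' with h'' | h''
  · exact h₁₂ (eq_of_update_mem_J1 hv h h')
  · exact h₁₂ (eq_of_update_mem_J1 hv h h')
  · exact h₁₃ (eq_of_update_mem_J1 hv h h'')
  · exact false_of_update_mem_J1_of_updates_mem hd hS hc hv h₁₂ h₁₃ h₂₃ h h' h''
  · exact h₂₃ (eq_of_update_mem_J1 hv h' h'')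
  · exact false_of_update_mem_J1_of_updates_mem hd hS hc hv h₁₂.symm h₂₃ h₁₃ h' h h''
  · exact
      false_of_update_mem_J1_of_updates_mem hd hS hc hv h₁₃.symm h₂₃.symm h₁₂ h'' h h'
  · exact false_of_three_updates_mem hd hS hc h₁₂ h₁₃ h₂₃ h h' h''

end Neighbours

theorem stmt13_general (d : ℕ) (hd : 15 ≤ d) (T : ℕ) (S : ℕ → Cube (d - 9))
    (hsnake : IsSnake (d - 9) 3 T S) (hconds : SnakeConds (d - 9) T S) :
    ∀ v : Cube d, v ∉ I0 d T S ∪ J1 d ∪ J2 d ∪ J3 d →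
      {u : Cube d | hammingDist u v = 1 ∧ u ∈ I0 d T S ∪ J1 d ∪ J2 d ∪ J3 d}.ncard < 3 := by
  intro v hv
  by_contra! h3
  obtain ⟨u₁, ⟨hu₁, h₁⟩, u₂, ⟨hu₂, h₂⟩, u₃, ⟨hu₃, h₃⟩, hu₁₂, hu₁₃, hu₂₃⟩ :=
    (Set.two_lt_ncard (Set.toFinite _)).1 h3
  obtain ⟨m₁, rfl⟩ := exists_eq_update_of_hammingDist_eq_one hu₁
  obtain ⟨m₂, rfl⟩ := exists_eq_update_of_hammingDist_eq_one hu₂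
  obtain ⟨m₃, rfl⟩ := exists_eq_update_of_hammingDist_eq_one hu₃
  have h₁₂ : m₁ ≠ m₂ := by rintro rfl; exact hu₁₂ rfl
  have h₁₃ : m₁ ≠ m₃ := by rintro rfl; exact hu₁₃ rfl
  have h₂₃ : m₂ ≠ m₃ := by rintro rfl; exact hu₂₃ rfl
  exact false_of_three_updates_mem_union (by omega) hsnake hconds
    (fun h => hv (Or.inl (Or.inl (Or.inr h)))) h₁₂ h₁₃ h₂₃ h₁ h₂ h₃

/-- (Base of Claim 1.) Let `d ≥ 15` be odd, `d'' = d − 9`, and let `S`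
be a `3`-snake of length `T` in `Q_{d''}` satisfying the five snake conditions. Then
`I' = I_0 ∪ J_1 ∪ J_2 ∪ J_3` is stable under 3-neighbour bootstrap percolation on `Q_d`:
no vertex outside `I'` has three or more neighbours in `I'`. -/
theorem stmt13 (d : ℕ) (hd : 15 ≤ d) (hodd : Odd d) (T : ℕ) (S : ℕ → Cube (d - 9))
    (hsnake : IsSnake (d - 9) 3 T S) (hconds : SnakeConds (d - 9) T S) :
    ∀ v : Cube d, v ∉ I0 d T S ∪ J1 d ∪ J2 d ∪ J3 d →
      {u : Cube d | hammingDist u v = 1 ∧ u ∈ I0 d T S ∪ J1 d ∪ J2 d ∪ J3 d}.ncard < 3 :=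
  stmt13_general d hd T S hsnake hconds
end
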